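/- Let δ > 0 and define the uniform quantizer q_δ : ℝ → δ(2ℤ − 1) by q_δ(v) := (2⌈v/(2δ)⌉ − 1)δ, where ⌈·⌉ denotes the ceiling function. Let τ be a random variable uniformly distributed on [−δ, δ]. Then for every s ∈ ℝ: E[q_δ(s + τ)] = s. -/

import Mathlib

open MeasureTheory ProbabilityTheory

/-- The uniform probability measure on the interval `[a, b]`. -/
noncomputable def unifMeasure (a b : ℝ) : Measure ℝ :=
  (ENNReal.ofReal (b - a))⁻¹ • volume.restrict (Set.Icc a b)

/-- The uniform quantizer `q_δ(v) := (2⌈v/(2δ)⌉ − 1)δ` with resolution `δ > 0`. -/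
noncomputable def uniformQuantizer (δ v : ℝ) : ℝ := (2 * (⌈v / (2 * δ)⌉ : ℤ) - 1) * δ

open Set

/-! On each cell `(2δ(k-1), 2δk]` the quantizer is the constant `(2k-1)δ`, the cell's centre, so
`v ↦ q_δ v - v` is `2δ`-periodic with zero mean over a period. Hence the average of `q_δ` over any
window `[s - δ, s + δ]` of length one period equals the average of the identity, namely `s`. -/

section UniformQuantizer

variable {δ : ℝ}

theorem uniformQuantizer_monotone (hδ : 0 < δ) : Monotone (uniformQuantizer δ) := by
  intro v w hvw
  unfold uniformQuantizer
  gcongr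

theorem uniformQuantizer_add_period (hδ : δ ≠ 0) (v : ℝ) :
    uniformQuantizer δ (v + 2 * δ) = uniformQuantizer δ v + 2 * δ := by
  have hshift : (v + 2 * δ) / (2 * δ) = v / (2 * δ) + 1 := by field_simp
  simp only [uniformQuantizer, hshift, Int.ceil_add_one]
  push_cast
  ring

theorem periodic_uniformQuantizer_sub_id (hδ : δ ≠ 0) :
    Function.Periodic (fun v => uniformQuantizer δ v - v) (2 * δ) := fun v => by
  simp only [uniformQuantizer_add_period hδ]
  ring

theorem uniformQuantizer_of_mem_Ioc (hδ : 0 < δ) {v : ℝ} (hv : v ∈ Ioc 0 (2 * δ)) :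
    uniformQuantizer δ v = δ := by
  have hceil : ⌈v / (2 * δ)⌉ = 1 := by
    rw [Int.ceil_eq_iff]
    constructor
    · push_cast
      exact (sub_self (1 : ℝ)).trans_lt (div_pos hv.1 (by positivity))
    · exact_mod_cast (div_le_one (by positivity)).mpr hv.2
  simp only [uniformQuantizer, hceil]
  norm_num

theorem integral_uniformQuantizer_sub_id_period (hδ : 0 < δ) :
    ∫ v in (0 : ℝ)..2 * δ, (uniformQuantizer δ v - v) = 0 := by
  have hcell : ∫ v in (0 : ℝ)..2 * δ, (uniformQuantizer δ v - v)
      = ∫ v in (0 : ℝ)..2 * δ, (δ - v) := by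
    refine intervalIntegral.integral_congr_ae (.of_forall fun v hv => ?_)
    rw [uIoc_of_le (by positivity)] at hv
    rw [uniformQuantizer_of_mem_Ioc hδ hv]
  rw [hcell, intervalIntegral.integral_sub intervalIntegrable_const
    intervalIntegral.intervalIntegrable_id, intervalIntegral.integral_const, integral_id]
  simp only [smul_eq_mul]
  ring

theorem integral_uniformQuantizer_window (hδ : 0 < δ) (s : ℝ) :
    ∫ v in s - δ..s + δ, uniformQuantizer δ v = 2 * δ * s := by
  have hwindow : s + δ = s - δ + 2 * δ := by ring
  have hmean : ∫ v in s - δ..s + δ, (uniformQuantizer δ v - v) = 0 := by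
    rw [hwindow, (periodic_uniformQuantizer_sub_id hδ.ne').intervalIntegral_add_eq (s - δ) 0,
      zero_add, integral_uniformQuantizer_sub_id_period hδ]
  rw [intervalIntegral.integral_sub (uniformQuantizer_monotone hδ).intervalIntegrable
    intervalIntegral.intervalIntegrable_id, integral_id, sub_eq_zero] at hmean
  rw [hmean]
  ring

end UniformQuantizer

theorem integral_unifMeasure {E : Type*} [NormedAddCommGroup E] [NormedSpace ℝ E] {a b : ℝ}
    (hab : a ≤ b) (f : ℝ → E) :
    ∫ t, f t ∂unifMeasure a b = (b - a)⁻¹ • ∫ t in a..b, f t := by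
  rw [unifMeasure, integral_smul_measure, intervalIntegral.integral_of_le hab,
    integral_Icc_eq_integral_Ioc, ENNReal.toReal_inv, ENNReal.toReal_ofReal (sub_nonneg.mpr hab)]

theorem stmt_18_general {Ω : Type*} [MeasurableSpace Ω] (P : Measure Ω)
    (δ : ℝ) (hδ : 0 < δ) (τ : Ω → ℝ) (hτm : Measurable τ)
    (hτ : Measure.map τ P = unifMeasure (-δ) δ) (s : ℝ) :
    ∫ ω, uniformQuantizer δ (s + τ ω) ∂P = s := by
  have hq : Measurable fun t => uniformQuantizer δ (s + t) :=
    (uniformQuantizer_monotone hδ).measurable.comp (measurable_const_add s)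
  rw [← integral_map hτm.aemeasurable hq.aestronglyMeasurable, hτ,
    integral_unifMeasure (by linarith), intervalIntegral.integral_comp_add_left,
    ← sub_eq_add_neg, integral_uniformQuantizer_window hδ, smul_eq_mul]
  field_simp
  ring

/-- If `τ` is uniformly distributed on `[−δ, δ]` (`δ > 0`), then for every
`s ∈ ℝ`: `E[q_δ(s + τ)] = s`, i.e. the uniformly dithered quantizer is unbiased. -/
theorem stmt_18 {Ω : Type*} [MeasurableSpace Ω] (P : Measure Ω) [IsProbabilityMeasure P]
    (δ : ℝ) (hδ : 0 < δ) (τ : Ω → ℝ) (hτm : Measurable τ)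
    (hτ : Measure.map τ P = unifMeasure (-δ) δ) (s : ℝ) :
    ∫ ω, uniformQuantizer δ (s + τ ω) ∂P = s :=
  stmt_18_general P δ hδ τ hτm hτ s
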